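/- For α₁, α₂ > 0, β₁, β₂ > 0 with α₁/α₂ < 1, and y₁, y₂ > 0: ∫_0^∞ x^{β₁+β₂-2} exp(-y₁ x^{α₁} - y₂ x^{α₂}) dx = α₂^{-1} y₂^{-(β₁+β₂-1)/α₂} 𝕃_{α₁/α₂, (β₁+β₂-1)/α₂}(y₁ y₂^{-α₁/α₂}), provided β₁+β₂ > 1. -/

import Mathlib

/-!
Expand `exp (-y₁ x^{α₁})` in its power series and integrate term by term against the weight
`x^{β₁+β₂-2} exp (-y₂ x^{α₂})`; after `t = x^{α₂}` each term is a Gamma integral. Termwise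
integration is dominated convergence with majorant `exp (y₁ x^{α₁})` times the weight, which is
integrable because `α₁ < α₂` lets `y₁ x^{α₁}` be absorbed by `(y₂/2) x^{α₂}` up to a constant.
-/

open MeasureTheory Real Set

lemma Real.hasSum_pow_div_factorial (x : ℝ) :
    HasSum (fun n : ℕ => x ^ n / n.factorial) (exp x) := by
  rw [exp_eq_exp_ℝ]
  exact NormedSpace.expSeries_div_hasSum_exp x

theorem MeasureTheory.hasSum_integral_pow_div_factorial_mul {α : Type*} [MeasurableSpace α]
    {μ : Measure α} {f g : α → ℝ} (hf : AEStronglyMeasurable f μ)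
    (hg : AEStronglyMeasurable g μ) (hint : Integrable (fun x => exp |f x| * g x) μ) :
    HasSum (fun n : ℕ => ∫ x, f x ^ n / n.factorial * g x ∂μ) (∫ x, exp (f x) * g x ∂μ) := by
  have hnorm (n : ℕ) (x : α) :
      ‖f x ^ n / n.factorial * g x‖ = |f x| ^ n / n.factorial * |g x| := by simp
  refine hasSum_integral_of_dominated_convergence
    (fun n x => |f x| ^ n / n.factorial * |g x|) (fun n => by fun_prop)
    (fun n => ae_of_all _ fun x => (hnorm n x).le)
    (ae_of_all _ fun x => ((hasSum_pow_div_factorial _).mul_right _).summable) ?_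
    (ae_of_all _ fun x => (hasSum_pow_div_factorial _).mul_right _)
  refine hint.norm.congr (ae_of_all _ fun x => ?_)
  dsimp only
  rw [((hasSum_pow_div_factorial _).mul_right _).tsum_eq, norm_mul, norm_eq_abs, norm_eq_abs,
    abs_exp]

lemma Real.exists_rpow_le_add_mul {θ ε : ℝ} (hθ₀ : 0 ≤ θ) (hθ₁ : θ < 1) (hε : 0 < ε) :
    ∃ C, ∀ t : ℝ, 0 ≤ t → t ^ θ ≤ C + ε * t := by
  set T := ε ^ (θ - 1)⁻¹
  have hT : 0 < T := rpow_pos_of_pos hε _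
  have hTε : T ^ (θ - 1) = ε := by
    rw [← rpow_mul hε.le, inv_mul_cancel₀ (by linarith), rpow_one]
  refine ⟨T ^ θ, fun t ht => ?_⟩
  rcases le_total t T with htT | hTt
  · linarith [rpow_le_rpow ht htT hθ₀, mul_nonneg hε.le ht]
  · have ht₀ : 0 < t := hT.trans_le hTt
    calc t ^ θ = t ^ (θ - 1) * t := by rw [rpow_sub_one ht₀.ne']; field_simp
      _ ≤ ε * t := by
        rw [← hTε]
        exact mul_le_mul_of_nonneg_right (rpow_le_rpow_of_nonpos hT hTt (by linarith)) ht
      _ ≤ T ^ θ + ε * t := by linarith [rpow_nonneg hT.le θ]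

lemma integrableOn_exp_mul_rpow_mul_rpow_mul_exp_neg_mul_rpow {α₁ α₂ q y₁ y₂ : ℝ}
    (hα₁ : 0 ≤ α₁) (hα : α₁ < α₂) (hq : -1 < q) (hy₂ : 0 < y₂) :
    IntegrableOn (fun x : ℝ => exp (y₁ * x ^ α₁) * (x ^ q * exp (-y₂ * x ^ α₂))) (Ioi 0) := by
  have hα₂ : 0 < α₂ := hα₁.trans_lt hα
  obtain ⟨C, hC⟩ := exists_rpow_le_add_mul (div_nonneg hα₁ hα₂.le) ((div_lt_one hα₂).2 hα)
    (show 0 < y₂ / (2 * (|y₁| + 1)) by positivity)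
  have habsorb (x : ℝ) (hx : 0 < x) : y₁ * x ^ α₁ ≤ (|y₁| + 1) * C + y₂ / 2 * x ^ α₂ := by
    have hy₁ : y₁ ≤ |y₁| + 1 := by linarith [le_abs_self y₁]
    calc y₁ * x ^ α₁ ≤ (|y₁| + 1) * (x ^ α₂) ^ (α₁ / α₂) := by
          rw [← rpow_mul hx.le, mul_div_cancel₀ _ hα₂.ne']
          exact mul_le_mul_of_nonneg_right hy₁ (rpow_nonneg hx.le α₁)
      _ ≤ (|y₁| + 1) * (C + y₂ / (2 * (|y₁| + 1)) * x ^ α₂) := by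
          gcongr
          exact hC _ (rpow_nonneg hx.le α₂)
      _ = (|y₁| + 1) * C + y₂ / 2 * x ^ α₂ := by field_simp
  refine Integrable.mono' ((integrableOn_rpow_mul_exp_neg_mul_rpow hq hα₂ (half_pos hy₂)).const_mul
    (exp ((|y₁| + 1) * C))) (by fun_prop) ?_
  filter_upwards [ae_restrict_mem measurableSet_Ioi] with x (hx : 0 < x)
  rw [norm_of_nonneg (by positivity)]
  calc exp (y₁ * x ^ α₁) * (x ^ q * exp (-y₂ * x ^ α₂))
      = x ^ q * exp (y₁ * x ^ α₁ - y₂ * x ^ α₂) := by rw [sub_eq_add_neg, exp_add]; ring_nf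
    _ ≤ x ^ q * exp ((|y₁| + 1) * C - y₂ / 2 * x ^ α₂) := by
        gcongr x ^ q * exp ?_
        linarith [habsorb x hx]
    _ = _ := by rw [sub_eq_add_neg, exp_add]; ring_nf

lemma integral_pow_mul_rpow_mul_exp_neg_mul_rpow {α₁ α₂ q y₂ : ℝ} (y₁ : ℝ) (n : ℕ)
    (hα₁ : 0 ≤ α₁) (hα₂ : 0 < α₂) (hq : -1 < q) (hy₂ : 0 < y₂) :
    ∫ x in Ioi (0 : ℝ), (-y₁ * x ^ α₁) ^ n / n.factorial * (x ^ q * exp (-y₂ * x ^ α₂))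
      = α₂⁻¹ * y₂ ^ (-((q + 1) / α₂)) *
          ((-1 : ℝ) ^ n * Gamma (α₁ / α₂ * n + (q + 1) / α₂) / n.factorial *
            (y₁ * y₂ ^ (-(α₁ / α₂))) ^ n) := by
  have hmoment :
      ∫ x in Ioi (0 : ℝ), (-y₁ * x ^ α₁) ^ n / n.factorial * (x ^ q * exp (-y₂ * x ^ α₂))
        = (-y₁) ^ n / n.factorial * ∫ x in Ioi (0 : ℝ), x ^ (α₁ * n + q) * exp (-y₂ * x ^ α₂) := by
    rw [← integral_const_mul]
    refine setIntegral_congr_fun measurableSet_Ioi fun x (hx : 0 < x) => ?_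
    rw [mul_pow, ← rpow_natCast (x ^ α₁), ← rpow_mul hx.le, rpow_add hx]
    ring
  have hq' : -1 < α₁ * n + q := by nlinarith [mul_nonneg hα₁ n.cast_nonneg]
  rw [hmoment, integral_rpow_mul_exp_neg_mul_rpow hα₂ hq' hy₂, mul_pow, neg_eq_neg_one_mul y₁,
    mul_pow, ← rpow_natCast (y₂ ^ _), ← rpow_mul hy₂.le,
    show (α₁ * n + q + 1) / α₂ = α₁ / α₂ * n + (q + 1) / α₂ by field_simp; ring,
    show -(α₁ * n + q + 1) / α₂ = -((q + 1) / α₂) + -(α₁ / α₂) * n by field_simp; ring,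
    rpow_add hy₂]
  ring

theorem stmt_8_general (α₁ α₂ β₁ β₂ y₁ y₂ : ℝ)
    (hα₁ : 0 < α₁) (hα₂ : 0 < α₂) (hαα : α₁ / α₂ < 1)
    (hβ : 1 < β₁ + β₂)
    (hy₂ : 0 < y₂) :
    ∫ x in Set.Ioi (0 : ℝ), x ^ (β₁ + β₂ - 2) * Real.exp (-y₁ * x ^ α₁ - y₂ * x ^ α₂)
      = α₂⁻¹ * y₂ ^ (-((β₁ + β₂ - 1) / α₂)) *
          ∑' n : ℕ, ((-1 : ℝ) ^ n * Real.Gamma ((α₁ / α₂) * n + (β₁ + β₂ - 1) / α₂)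
              / (n.factorial : ℝ)) * (y₁ * y₂ ^ (-(α₁ / α₂))) ^ n := by
  set q := β₁ + β₂ - 2
  have hq : -1 < q := by linarith
  rw [show β₁ + β₂ - 1 = q + 1 by ring]
  have hint :
      IntegrableOn (fun x => exp |-y₁ * x ^ α₁| * (x ^ q * exp (-y₂ * x ^ α₂))) (Ioi 0) := by
    refine (integrableOn_exp_mul_rpow_mul_rpow_mul_exp_neg_mul_rpow (y₁ := |y₁|) hα₁.le
      ((div_lt_one hα₂).1 hαα) hq hy₂).congr_fun (fun x (hx : 0 < x) => ?_) measurableSet_Ioi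
    rw [abs_mul, abs_neg, abs_of_pos (rpow_pos_of_pos hx α₁)]
  have hsum := hasSum_integral_pow_div_factorial_mul (by fun_prop) (by fun_prop) hint
  simp only [integral_pow_mul_rpow_mul_exp_neg_mul_rpow y₁ _ hα₁.le hα₂ hq hy₂] at hsum
  rw [← tsum_mul_left, hsum.tsum_eq]
  refine setIntegral_congr_fun measurableSet_Ioi fun x _ => ?_
  rw [sub_eq_add_neg, exp_add, neg_mul y₂]
  ring

/-- Formula (1.13): for `α₁, α₂ > 0` with `α₁/α₂ < 1`, `β₁, β₂ > 0` with `β₁+β₂ > 1`,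
and `y₁, y₂ > 0`,
`∫_0^∞ x^{β₁+β₂-2} exp(-y₁ x^{α₁} - y₂ x^{α₂}) dx
  = α₂⁻¹ y₂^{-(β₁+β₂-1)/α₂} 𝕃_{α₁/α₂,(β₁+β₂-1)/α₂}(y₁ y₂^{-α₁/α₂})`. -/
theorem stmt_8 (α₁ α₂ β₁ β₂ y₁ y₂ : ℝ)
    (hα₁ : 0 < α₁) (hα₂ : 0 < α₂) (hαα : α₁ / α₂ < 1)
    (hβ₁ : 0 < β₁) (hβ₂ : 0 < β₂) (hβ : 1 < β₁ + β₂)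
    (hy₁ : 0 < y₁) (hy₂ : 0 < y₂) :
    ∫ x in Set.Ioi (0 : ℝ), x ^ (β₁ + β₂ - 2) * Real.exp (-y₁ * x ^ α₁ - y₂ * x ^ α₂)
      = α₂⁻¹ * y₂ ^ (-((β₁ + β₂ - 1) / α₂)) *
          ∑' n : ℕ, ((-1 : ℝ) ^ n * Real.Gamma ((α₁ / α₂) * n + (β₁ + β₂ - 1) / α₂)
              / (n.factorial : ℝ)) * (y₁ * y₂ ^ (-(α₁ / α₂))) ^ n :=
  stmt_8_general α₁ α₂ β₁ β₂ y₁ y₂ hα₁ hα₂ hαα hβ hy₂
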